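/- Let {u_i}_{i∈I} ⊂ H and suppose the map S : H → H, Su = Σ_i u_i⟨u_i, u⟩, is well defined (everywhere convergent) and surjective. Then {u_i}_{i∈I} is a frame for H. In particular, S is automatically bounded (by the closed graph theorem), positive, and invertible. -/

import Mathlib

noncomputable section
open MulOpposite

abbrev ℍ := Quaternion ℝ

/-- A right quaternionic Hilbert space: a complete normed additive group with a right
ℍ-module structure (encoded via scalars in `ℍᵐᵒᵖ`, so `op q • v` is the right action `v.q`)
and an ℍ-valued Hermitian inner product compatible with the norm. -/
class QuatHilbert (H : Type*) extends NormedAddCommGroup H, Module ℍᵐᵒᵖ H, CompleteSpace H where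
  qinner : H → H → ℍ
  conj_symm : ∀ u v, qinner u v = star (qinner v u)
  add_right : ∀ u v w, qinner u (v + w) = qinner u v + qinner u w
  smul_right : ∀ u v (q : ℍ), qinner u (op q • v) = qinner u v * q
  norm_sq : ∀ u, ‖u‖ ^ 2 = (qinner u u).re
  norm_op_smul : ∀ (q : ℍ) (u : H), ‖op q • u‖ = ‖u‖ * ‖q‖

notation "⟪" x ", " y "⟫" => QuatHilbert.qinner x y

namespace QuatHilbertAux
open QuatHilbert

variable {H : Type*} [QuatHilbert H]

lemma qinner_add_left (u v w : H) : ⟪u + v, w⟫ = ⟪u, w⟫ + ⟪v, w⟫ := by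
  rw [conj_symm, add_right, star_add, ← conj_symm, ← conj_symm]

lemma qinner_smul_left (q : ℍ) (u v : H) : ⟪op q • u, v⟫ = star q * ⟪u, v⟫ := by
  rw [conj_symm, smul_right, star_mul, ← conj_symm]

lemma qinner_zero_right (u : H) : ⟪u, (0:H)⟫ = 0 := by
  have h := add_right u 0 0
  rw [add_zero] at h
  exact (left_eq_add.mp h)

lemma qinner_zero_left (u : H) : ⟪(0:H), u⟫ = 0 := by
  rw [conj_symm, qinner_zero_right, star_zero]

lemma qinner_neg_right (u v : H) : ⟪u, -v⟫ = -⟪u, v⟫ := by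
  have h := add_right u v (-v)
  rw [add_neg_cancel, qinner_zero_right] at h
  exact eq_neg_of_add_eq_zero_right h.symm

lemma qinner_neg_left (u v : H) : ⟪-u, v⟫ = -⟪u, v⟫ := by
  rw [conj_symm, qinner_neg_right, star_neg, ← conj_symm]

lemma qinner_sub_right (u v w : H) : ⟪u, v - w⟫ = ⟪u, v⟫ - ⟪u, w⟫ := by
  rw [sub_eq_add_neg, add_right, qinner_neg_right, sub_eq_add_neg]

lemma qinner_sub_left (u v w : H) : ⟪u - v, w⟫ = ⟪u, w⟫ - ⟪v, w⟫ := by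
  rw [sub_eq_add_neg, qinner_add_left, qinner_neg_left, sub_eq_add_neg]

lemma qinner_self_coe (x : H) : ⟪x, x⟫ = ((‖x‖ ^ 2 : ℝ) : ℍ) := by
  have h : ⟪x, x⟫ = star ⟪x, x⟫ := conj_symm x x
  have hI : (⟪x, x⟫).imI = 0 := by
    have := congrArg QuaternionAlgebra.imI h; simp at this; linarith
  have hJ : (⟪x, x⟫).imJ = 0 := by
    have := congrArg QuaternionAlgebra.imJ h; simp at this; linarith
  have hK : (⟪x, x⟫).imK = 0 := by
    have := congrArg QuaternionAlgebra.imK h; simp at this; linarith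
  have hre : (⟪x, x⟫).re = ‖x‖ ^ 2 := (norm_sq x).symm
  ext <;> simp [hI, hJ, hK, hre, ← Quaternion.coe_pow]

lemma norm_sq_eq (b : ℍ) : ‖b‖^2 = b.re^2 + b.imI^2 + b.imJ^2 + b.imK^2 := by
  have h1 := Quaternion.normSq_eq_norm_mul_self b
  have h2 := Quaternion.normSq_def' b
  nlinarith [h1, h2]

lemma re_le_norm (q : ℍ) : q.re ≤ ‖q‖ := by
  have h1 := norm_sq_eq q
  nlinarith [norm_nonneg q, sq_nonneg q.imI, sq_nonneg q.imJ, sq_nonneg q.imK,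
    sq_nonneg (‖q‖ - q.re), sq_nonneg (‖q‖ + q.re)]

/-- Cauchy–Schwarz. -/
lemma norm_qinner_le (x y : H) : ‖⟪x, y⟫‖ ≤ ‖x‖ * ‖y‖ := by
  by_cases hb : ⟪x, y⟫ = 0
  · rw [hb, norm_zero]; positivity
  set b := ⟪x, y⟫ with hbdef
  have hx0 : x ≠ 0 := by
    intro h; apply hb; rw [hbdef, h, qinner_zero_left]
  have ha : (0:ℝ) < ‖x‖ ^ 2 := by
    have : 0 < ‖x‖ := norm_pos_iff.mpr hx0
    positivity
  set t : ℝ := 1 / ‖x‖ ^ 2 with htdef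
  set w : H := op ((t : ℍ) * b) • x - y with hwdef
  have hexp : ⟪w, w⟫ = star ((t:ℍ) * b) * (((‖x‖^2 : ℝ):ℍ) * ((t:ℍ) * b))
      - star ((t:ℍ) * b) * b - star b * ((t:ℍ) * b) + ((‖y‖^2 : ℝ):ℍ) := by
    rw [hwdef]
    simp only [qinner_sub_left, qinner_sub_right, qinner_smul_left, smul_right]
    rw [qinner_self_coe x, qinner_self_coe y, conj_symm y x, ← hbdef]
    noncomm_ring
  have hre : (⟪w, w⟫).re = t^2 * ‖x‖^2 * ‖b‖^2 - 2 * t * ‖b‖^2 + ‖y‖^2 := by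
    rw [hexp, norm_sq_eq b]
    simp [Quaternion.re_mul, Quaternion.re_star, Quaternion.imI_star, Quaternion.imJ_star,
      Quaternion.imK_star, Quaternion.re_coe, Quaternion.imI_coe, Quaternion.imJ_coe,
      Quaternion.imK_coe, Quaternion.imI_mul, Quaternion.imJ_mul, Quaternion.imK_mul,
      ← Quaternion.coe_pow]
    ring
  have key : (0:ℝ) ≤ t^2 * ‖x‖^2 * ‖b‖^2 - 2 * t * ‖b‖^2 + ‖y‖^2 := by
    rw [← hre, ← norm_sq]; positivity
  have key' : ‖b‖^2 ≤ ‖x‖^2 * ‖y‖^2 := by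
    rw [htdef] at key
    have e : (1/‖x‖^2)^2 * ‖x‖^2 * ‖b‖^2 - 2*(1/‖x‖^2)*‖b‖^2 + ‖y‖^2
        = ‖y‖^2 - ‖b‖^2/‖x‖^2 := by
      field_simp
      ring
    rw [e] at key
    have h2 : ‖b‖^2 / ‖x‖^2 ≤ ‖y‖^2 := by linarith
    calc ‖b‖^2 = (‖b‖^2/‖x‖^2) * ‖x‖^2 := by field_simp
      _ ≤ ‖y‖^2 * ‖x‖^2 := mul_le_mul_of_nonneg_right h2 (le_of_lt ha)
      _ = ‖x‖^2*‖y‖^2 := by ring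
  nlinarith [norm_nonneg b, norm_nonneg x, norm_nonneg y, key',
    sq_nonneg (‖b‖ - ‖x‖*‖y‖), sq_nonneg (‖b‖ + ‖x‖*‖y‖),
    mul_nonneg (norm_nonneg x) (norm_nonneg y)]

end QuatHilbertAux

namespace QuatHilbertAux
open QuatHilbert

variable {H : Type*} [QuatHilbert H]

lemma continuous_qinner_left (y : H) : Continuous fun x : H => ⟪x, y⟫ := by
  refine (LipschitzWith.of_dist_le_mul (K := ‖y‖₊) fun a b => ?_).continuous
  rw [dist_eq_norm, dist_eq_norm, ← qinner_sub_left, coe_nnnorm]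
  calc ‖⟪a - b, y⟫‖ ≤ ‖a - b‖ * ‖y‖ := norm_qinner_le _ _
    _ = ‖y‖ * ‖a - b‖ := mul_comm _ _

lemma continuous_qinner_right (x : H) : Continuous fun y : H => ⟪x, y⟫ := by
  refine (LipschitzWith.of_dist_le_mul (K := ‖x‖₊) fun a b => ?_).continuous
  rw [dist_eq_norm, dist_eq_norm, ← qinner_sub_right, coe_nnnorm]
  exact norm_qinner_le _ _

lemma continuous_op_smul (q : ℍ) : Continuous fun v : H => op q • v := by
  refine (LipschitzWith.of_dist_le_mul (K := ‖q‖₊) fun a b => ?_).continuous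
  rw [dist_eq_norm, dist_eq_norm, ← smul_sub, norm_op_smul, coe_nnnorm, mul_comm]

/-- `H` is a real module by restriction of scalars along `ℝ → ℍᵐᵒᵖ`. -/
instance realModule : Module ℝ H :=
  Module.compHom H ((algebraMap ℝ ℍ).toOpposite fun x y => Algebra.commutes x _)

lemma real_smul_def (r : ℝ) (x : H) : r • x = op (r : ℍ) • x := by
  show op ((algebraMap ℝ ℍ) r) • x = op (r : ℍ) • x
  rfl

instance : NormedSpace ℝ H :=
  ⟨fun r x => by
    rw [real_smul_def, norm_op_smul, Quaternion.norm_coe]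
    exact le_of_eq (mul_comm _ _)⟩

/-- Cauchy–Schwarz for series. -/
lemma tsum_mul_le {ι : Type*} (a b : ι → ℝ) (ha0 : ∀ i, 0 ≤ a i) (hb0 : ∀ i, 0 ≤ b i)
    (ha : Summable fun i => a i ^ 2) (hb : Summable fun i => b i ^ 2) :
    Summable (fun i => a i * b i) ∧
      ∑' i, a i * b i ≤ Real.sqrt (∑' i, a i ^ 2) * Real.sqrt (∑' i, b i ^ 2) := by
  have hs : Summable fun i => a i * b i := by
    refine Summable.of_nonneg_of_le (fun i => mul_nonneg (ha0 i) (hb0 i))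
      (fun i => ?_) ((ha.add hb).div_const 2)
    nlinarith [sq_nonneg (a i - b i)]
  refine ⟨hs, Summable.tsum_le_of_sum_le hs fun s => ?_⟩
  have h1 := Finset.sum_mul_sq_le_sq_mul_sq s a b
  have h2 : ∑ i ∈ s, a i ^ 2 ≤ ∑' i, a i ^ 2 := Summable.sum_le_tsum s (fun i _ => sq_nonneg _) ha
  have h3 : ∑ i ∈ s, b i ^ 2 ≤ ∑' i, b i ^ 2 := Summable.sum_le_tsum s (fun i _ => sq_nonneg _) hb
  have h4 : (0:ℝ) ≤ ∑ i ∈ s, a i * b i :=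
    Finset.sum_nonneg fun i _ => mul_nonneg (ha0 i) (hb0 i)
  have h5 : (∑ i ∈ s, a i * b i) ^ 2 ≤ (∑' i, a i ^ 2) * (∑' i, b i ^ 2) :=
    le_trans h1 (mul_le_mul h2 h3 (Finset.sum_nonneg fun i _ => sq_nonneg _)
      (tsum_nonneg fun i => sq_nonneg _))
  calc ∑ i ∈ s, a i * b i = Real.sqrt ((∑ i ∈ s, a i * b i) ^ 2) := (Real.sqrt_sq h4).symm
    _ ≤ Real.sqrt ((∑' i, a i ^ 2) * (∑' i, b i ^ 2)) := Real.sqrt_le_sqrt h5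
    _ = Real.sqrt (∑' i, a i ^ 2) * Real.sqrt (∑' i, b i ^ 2) :=
        Real.sqrt_mul (tsum_nonneg fun i => sq_nonneg _) _

end QuatHilbertAux

open QuatHilbertAux QuatHilbert


/-- `Ls` is the adjoint of `L`: `⟨Lu, v⟩ = ⟨u, L*v⟩` for all `u, v`. -/
def IsAdjointPair {H K : Type*} [QuatHilbert H] [QuatHilbert K]
    (L : H →L[ℍᵐᵒᵖ] K) (Ls : K →L[ℍᵐᵒᵖ] H) : Prop :=
  ∀ (u : H) (v : K), ⟪L u, v⟫ = ⟪u, Ls v⟫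

/-- Operator norm of a bounded right ℍ-linear operator. -/
def qOpNorm {E F : Type*} [NormedAddCommGroup E] [NormedAddCommGroup F]
    [Module ℍᵐᵒᵖ E] [Module ℍᵐᵒᵖ F] (L : E →L[ℍᵐᵒᵖ] F) : ℝ :=
  sInf {M : ℝ | 0 ≤ M ∧ ∀ u : E, ‖L u‖ ≤ M * ‖u‖}

/-- `u` is a frame with frame bounds `A`, `B` :
`A‖x‖² ≤ Σ_i |⟨u_i, x⟩|² ≤ B‖x‖²` for all `x`. -/
def IsFrameWith {H : Type*} [QuatHilbert H] {I : Type*} (u : I → H) (A B : ℝ) : Prop :=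
  ∀ x : H, Summable (fun i => ‖⟪u i, x⟫‖ ^ 2) ∧
    A * ‖x‖ ^ 2 ≤ ∑' i, ‖⟪u i, x⟫‖ ^ 2 ∧ (∑' i, ‖⟪u i, x⟫‖ ^ 2) ≤ B * ‖x‖ ^ 2

/-- `u` is a frame: there are bounds `0 < A ≤ B`. -/
def IsFrame {H : Type*} [QuatHilbert H] {I : Type*} (u : I → H) : Prop :=
  ∃ A B : ℝ, 0 < A ∧ A ≤ B ∧ IsFrameWith u A B

/-- `u` is a Bessel sequence: `Σ_i |⟨u_i, x⟩|² ≤ B‖x‖²` for some `B`. -/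
def IsBessel {H : Type*} [QuatHilbert H] {I : Type*} (u : I → H) : Prop :=
  ∃ B : ℝ, 0 < B ∧ ∀ x : H, Summable (fun i => ‖⟪u i, x⟫‖ ^ 2) ∧
    (∑' i, ‖⟪u i, x⟫‖ ^ 2) ≤ B * ‖x‖ ^ 2

/-- `S` is the frame operator of `u` : `S x = Σ_i u_i ⟨u_i, x⟩`. -/
def IsFrameOp {H : Type*} [QuatHilbert H] {I : Type*} (u : I → H) (S : H →L[ℍᵐᵒᵖ] H) : Prop :=
  ∀ x : H, HasSum (fun i => op ⟪u i, x⟫ • u i) (S x)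

/-- The space ℓ²(ℍ) of square-summable quaternion families. -/
abbrev lp2 (I : Type*) := lp (fun _ : I => ℍ) 2

/-- `T` is the pre-frame (synthesis) operator of `u` : `T q = Σ_i u_i q_i`. -/
def IsPreFrameOp {H : Type*} [QuatHilbert H] {I : Type*} (u : I → H)
    (T : lp2 I →L[ℍᵐᵒᵖ] H) : Prop :=
  ∀ q : lp2 I, HasSum (fun i => op (q i) • u i) (T q)

/-- The ℓ²(ℍ) inner product `⟨p, q⟩ = Σ_i conj(p_i) q_i`. -/
def l2inner {I : Type*} (p q : lp2 I) : ℍ := ∑' i, star (p i) * q i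

/-- Orthogonal complement of a set in a right quaternionic Hilbert space. -/
def orthoComp {H : Type*} [QuatHilbert H] (A : Set H) : Set H :=
  {v : H | ∀ u ∈ A, ⟪v, u⟫ = 0}

/-- Orthogonal complement in ℓ²(ℍ). -/
def l2orthoComp {I : Type*} (A : Set (lp2 I)) : Set (lp2 I) :=
  {v : lp2 I | ∀ u ∈ A, l2inner v u = 0}

/-- If the frame-operator map `S : H → H`, `Su = Σ_i u_i⟨u_i, u⟩`, is well
defined (everywhere convergent) and surjective, then `{u_i}` is a frame; in particular `S`
is automatically bounded (continuous) and invertible (bijective). -/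
theorem stmt9 {H : Type*} [QuatHilbert H] {I : Type*} [Countable I]
    (u : I → H) (Sf : H → H)
    (hS : ∀ x : H, HasSum (fun i => op ⟪u i, x⟫ • u i) (Sf x))
    (hsurj : Function.Surjective Sf) :
    IsFrame u ∧ Continuous Sf ∧ Function.Bijective Sf := by
  classical
  -- additivity and right-linearity of `Sf`
  have hadd : ∀ x y : H, Sf (x + y) = Sf x + Sf y := by
    intro x y
    have h1 : HasSum (fun i => op ⟪u i, x⟫ • u i + op ⟪u i, y⟫ • u i) (Sf x + Sf y) :=
      (hS x).add (hS y)
    have h2 : (fun i => op ⟪u i, x + y⟫ • u i)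
        = fun i => op ⟪u i, x⟫ • u i + op ⟪u i, y⟫ • u i := by
      funext i; rw [QuatHilbert.add_right, op_add, add_smul]
    exact (hS (x + y)).unique (h2 ▸ h1)
  have hsmul : ∀ (q : ℍ) (x : H), Sf (op q • x) = op q • Sf x := by
    intro q x
    have h1 : HasSum (fun i => op q • (op ⟪u i, x⟫ • u i)) (op q • Sf x) := by
      have := (hS x).map (AddMonoidHom.mk' (fun v : H => op q • v) fun a b => smul_add _ a b)
        (continuous_op_smul q)
      simpa [Function.comp_def] using this
    have h2 : (fun i => op ⟪u i, op q • x⟫ • u i)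
        = fun i => op q • (op ⟪u i, x⟫ • u i) := by
      funext i; rw [QuatHilbert.smul_right, op_mul, mul_smul]
    exact (hS (op q • x)).unique (h2 ▸ h1)
  -- sums of inner products
  have hsumL : ∀ x y : H, HasSum (fun i => star ⟪u i, x⟫ * ⟪u i, y⟫) ⟪Sf x, y⟫ := by
    intro x y
    have h1 := (hS x).map (AddMonoidHom.mk' (fun z : H => ⟪z, y⟫) fun a b => qinner_add_left a b y)
      (continuous_qinner_left y)
    simpa [Function.comp_def, qinner_smul_left] using h1
  have hsumR : ∀ x y : H, HasSum (fun i => ⟪x, u i⟫ * ⟪u i, y⟫) ⟪x, Sf y⟫ := by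
    intro x y
    have h1 := (hS y).map (AddMonoidHom.mk' (fun z : H => ⟪x, z⟫) fun a b => add_right x a b)
      (continuous_qinner_right x)
    simpa [Function.comp_def, QuatHilbert.smul_right] using h1
  have hsym : ∀ x y : H, ⟪Sf x, y⟫ = ⟪x, Sf y⟫ := by
    intro x y
    refine (hsumL x y).unique ?_
    have he : (fun i => star ⟪u i, x⟫ * ⟪u i, y⟫) = fun i => ⟪x, u i⟫ * ⟪u i, y⟫ := by
      funext i; rw [QuatHilbert.conj_symm x (u i)]
    exact he ▸ hsumR x y
  have hsumN : ∀ x : H, HasSum (fun i => ‖⟪u i, x⟫‖ ^ 2) ((⟪Sf x, x⟫).re) := by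
    intro x
    have h1 := (hsumL x x).map (AddMonoidHom.mk' QuaternionAlgebra.re fun a b => rfl)
      Quaternion.continuous_re
    have h2 : HasSum (fun i => (star ⟪u i, x⟫ * ⟪u i, x⟫).re) ((⟪Sf x, x⟫).re) := by
      exact h1
    have he : (fun i => (star ⟪u i, x⟫ * ⟪u i, x⟫).re) = fun i => ‖⟪u i, x⟫‖ ^ 2 := by
      funext i
      rw [Quaternion.star_mul_self, Quaternion.re_coe, Quaternion.normSq_eq_norm_mul_self, sq]
    exact he ▸ h2
  -- kernel triviality
  have hzero : ∀ z : H, ⟪z, z⟫ = 0 → z = 0 := by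
    intro z hz
    have h := QuatHilbert.norm_sq z
    rw [hz] at h
    have h0 : ‖z‖ ^ 2 = 0 := by rw [h]; rfl
    have : ‖z‖ = 0 := by nlinarith [norm_nonneg z]
    exact norm_eq_zero.mp this
  have hker0 : ∀ z : H, Sf z = 0 → z = 0 := by
    intro z hz
    apply hzero
    obtain ⟨y, hy⟩ := hsurj z
    calc ⟪z, z⟫ = ⟪Sf y, z⟫ := by rw [hy]
      _ = ⟪y, Sf z⟫ := hsym y z
      _ = 0 := by rw [hz, qinner_zero_right]
  -- the real-linear operator
  let Slin : H →ₗ[ℝ] H :=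
    { toFun := Sf
      map_add' := hadd
      map_smul' := fun r x => by
        simp only [RingHom.id_apply]
        rw [real_smul_def, real_smul_def, hsmul] }
  have hgraph : IsClosed (Slin.graph : Set (H × H)) := by
    have hset : (Slin.graph : Set (H × H))
        = ⋂ z : H, {p : H × H | ⟪p.2, z⟫ = ⟪p.1, Sf z⟫} := by
      ext p
      simp only [SetLike.mem_coe, LinearMap.mem_graph_iff, Set.mem_iInter, Set.mem_setOf_eq]
      constructor
      · intro h z
        rw [show p.2 = Sf p.1 from h]
        exact hsym p.1 z
      · intro h
        have hz : ⟪p.2 - Sf p.1, p.2 - Sf p.1⟫ = 0 := by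
          have h1 : ∀ z : H, ⟪p.2 - Sf p.1, z⟫ = 0 := by
            intro z
            rw [qinner_sub_left, h z, hsym p.1 z, sub_self]
          exact h1 _
        have := hzero _ hz
        show p.2 = Sf p.1
        exact sub_eq_zero.mp this
    rw [hset]
    exact isClosed_iInter fun z => isClosed_eq
      ((continuous_qinner_left z).comp continuous_snd)
      ((continuous_qinner_left (Sf z)).comp continuous_fst)
  have hcont : Continuous Sf := Slin.continuous_of_isClosed_graph hgraph
  let Sc : H →L[ℝ] H := ⟨Slin, hcont⟩
  have hinj : Function.Injective Sf := by
    intro a b hab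
    have h0 : Sf (a - b) = 0 := by
      have h1 : Sf (a - b) = Sf a - Sf b := Slin.map_sub a b
      rw [h1, hab, sub_self]
    have := hker0 _ h0
    exact sub_eq_zero.mp this
  -- inverse via the open mapping theorem
  let e := ContinuousLinearEquiv.ofBijective Sc
    (LinearMap.ker_eq_bot'.mpr fun m hm => hker0 m hm)
    (LinearMap.range_eq_top.mpr hsurj)
  have hecoe : ∀ x : H, e x = Sf x := fun x => rfl
  have hSfsymm : ∀ x : H, Sf (e.symm x) = x := by
    intro x
    have h := e.apply_symm_apply x
    rw [← hecoe]
    exact h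
  set m : ℝ := ‖(e.symm : H →L[ℝ] H)‖ with hmdef
  have hm0 : 0 ≤ m := norm_nonneg _
  have hbound : ∀ x : H, ‖e.symm x‖ ≤ m * ‖x‖ := fun x =>
    (e.symm : H →L[ℝ] H).le_opNorm x
  -- upper frame bound
  have hupper : ∀ x : H, (⟪Sf x, x⟫).re ≤ ‖Sc‖ * ‖x‖ ^ 2 := by
    intro x
    calc (⟪Sf x, x⟫).re ≤ ‖⟪Sf x, x⟫‖ := re_le_norm _
      _ ≤ ‖Sf x‖ * ‖x‖ := norm_qinner_le _ _
      _ ≤ (‖Sc‖ * ‖x‖) * ‖x‖ :=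
          mul_le_mul_of_nonneg_right (Sc.le_opNorm x) (norm_nonneg x)
      _ = ‖Sc‖ * ‖x‖ ^ 2 := by ring
  -- lower frame bound
  have hlower : ∀ x : H, (1/(m+1)) * ‖x‖ ^ 2 ≤ ∑' i, ‖⟪u i, x⟫‖ ^ 2 := by
    intro x
    by_cases hx : x = 0
    · rw [hx]
      simp only [norm_zero]
      have : (1/(m+1)) * (0:ℝ) ^ 2 = 0 := by ring
      rw [this]
      exact tsum_nonneg fun i => sq_nonneg _
    · set y : H := e.symm x with hy
      have hSy : Sf y = x := hSfsymm x
      have hTa0 : (0:ℝ) ≤ ∑' i, ‖⟪u i, y⟫‖ ^ 2 := tsum_nonneg fun i => sq_nonneg _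
      have hTx0 : (0:ℝ) ≤ ∑' i, ‖⟪u i, x⟫‖ ^ 2 := tsum_nonneg fun i => sq_nonneg _
      have hTale : ∑' i, ‖⟪u i, y⟫‖ ^ 2 ≤ m * ‖x‖ ^ 2 := by
        have h1 : ∑' i, ‖⟪u i, y⟫‖ ^ 2 = (⟪x, y⟫).re := by
          rw [(hsumN y).tsum_eq, hSy]
        rw [h1]
        calc (⟪x, y⟫).re ≤ ‖⟪x, y⟫‖ := re_le_norm _
          _ ≤ ‖x‖ * ‖y‖ := norm_qinner_le _ _
          _ ≤ ‖x‖ * (m * ‖x‖) :=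
              mul_le_mul_of_nonneg_left (hbound x) (norm_nonneg x)
          _ = m * ‖x‖ ^ 2 := by ring
      have hsum_re : HasSum (fun i => (star ⟪u i, y⟫ * ⟪u i, x⟫).re) ((⟪Sf y, x⟫).re) := by
        have := (hsumL y x).map (AddMonoidHom.mk' QuaternionAlgebra.re fun a b => rfl)
          Quaternion.continuous_re
        exact this
      have hX : ‖x‖ ^ 2 = ∑' i, (star ⟪u i, y⟫ * ⟪u i, x⟫).re := by
        rw [hsum_re.tsum_eq, hSy, ← QuatHilbert.norm_sq]
      have CS := tsum_mul_le (fun i => ‖⟪u i, y⟫‖) (fun i => ‖⟪u i, x⟫‖)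
        (fun i => norm_nonneg _) (fun i => norm_nonneg _)
        (hsumN y).summable (hsumN x).summable
      have hle1 : ∑' i, (star ⟪u i, y⟫ * ⟪u i, x⟫).re
          ≤ ∑' i, ‖⟪u i, y⟫‖ * ‖⟪u i, x⟫‖ := by
        refine Summable.tsum_le_tsum (fun i => ?_) hsum_re.summable CS.1
        calc (star ⟪u i, y⟫ * ⟪u i, x⟫).re ≤ ‖star ⟪u i, y⟫ * ⟪u i, x⟫‖ := re_le_norm _
          _ = ‖⟪u i, y⟫‖ * ‖⟪u i, x⟫‖ := by rw [norm_mul, Quaternion.norm_star]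
      have hmain : ‖x‖ ^ 2
          ≤ Real.sqrt (∑' i, ‖⟪u i, y⟫‖ ^ 2) * Real.sqrt (∑' i, ‖⟪u i, x⟫‖ ^ 2) := by
        rw [hX]
        exact le_trans hle1 CS.2
      have hs : (Real.sqrt (∑' i, ‖⟪u i, y⟫‖ ^ 2) * Real.sqrt (∑' i, ‖⟪u i, x⟫‖ ^ 2)) ^ 2
          = (∑' i, ‖⟪u i, y⟫‖ ^ 2) * (∑' i, ‖⟪u i, x⟫‖ ^ 2) := by
        rw [mul_pow, Real.sq_sqrt hTa0, Real.sq_sqrt hTx0]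
      have hX2 : (‖x‖ ^ 2) ^ 2 ≤ (∑' i, ‖⟪u i, y⟫‖ ^ 2) * (∑' i, ‖⟪u i, x⟫‖ ^ 2) := by
        rw [← hs]
        exact pow_le_pow_left₀ (sq_nonneg _) hmain 2
      have hxpos : (0:ℝ) < ‖x‖ ^ 2 := by
        have := norm_pos_iff.mpr hx
        positivity
      have h5 : ‖x‖ ^ 2 ≤ m * ∑' i, ‖⟪u i, x⟫‖ ^ 2 := by
        have h6 : ‖x‖ ^ 2 * ‖x‖ ^ 2 ≤ (m * ∑' i, ‖⟪u i, x⟫‖ ^ 2) * ‖x‖ ^ 2 := by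
          nlinarith [hX2, hTale, hTx0, hxpos]
        exact le_of_mul_le_mul_right h6 hxpos
      have h7 : ‖x‖ ^ 2 ≤ (m + 1) * ∑' i, ‖⟪u i, x⟫‖ ^ 2 := by nlinarith [hTx0]
      calc (1/(m+1)) * ‖x‖ ^ 2 ≤ (1/(m+1)) * ((m + 1) * ∑' i, ‖⟪u i, x⟫‖ ^ 2) := by
            apply mul_le_mul_of_nonneg_left h7 (by positivity)
        _ = ∑' i, ‖⟪u i, x⟫‖ ^ 2 := by field_simp
  refine ⟨⟨1/(m+1), max ‖Sc‖ (1/(m+1)), by positivity, le_max_right _ _, ?_⟩,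
    hcont, hinj, hsurj⟩
  intro x
  refine ⟨(hsumN x).summable, hlower x, ?_⟩
  calc ∑' i, ‖⟪u i, x⟫‖ ^ 2 = (⟪Sf x, x⟫).re := (hsumN x).tsum_eq
    _ ≤ ‖Sc‖ * ‖x‖ ^ 2 := hupper x
    _ ≤ max ‖Sc‖ (1/(m+1)) * ‖x‖ ^ 2 :=
        mul_le_mul_of_nonneg_right (le_max_left _ _) (sq_nonneg _)
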